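/- Let b > 1 and n > 1 be integers and a a positive integer with gcd(r_b(n), a) = 1. The set of pseudo-Frobenius numbers of S_a(b,n) is exactly { (n−i+1)·(b^n − 1 − a) + a·r_b(n) : i = 2, …, n }, where the values are computed in ℤ. Consequently, the type of S_a(b,n) equals n − 1. -/

import Mathlib

set_option linter.unusedSectionVars false

/-- The repunit number in base `b` of length `ℓ`: `r_b(ℓ) = ∑_{j=0}^{ℓ-1} b^j`. -/
def repunit (b ℓ : ℕ) : ℕ := ∑ j ∈ Finset.range ℓ, b ^ j

/-- The sequence `a_i = r_b(n) + a·r_b(i-1)`. -/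
def aseq (b a n i : ℕ) : ℕ := repunit b n + a * repunit b (i - 1)

/-- The additive submonoid `S_a(b,n)` of `ℕ` generated by `{a_i : i ≥ 1}`. -/
def grep (b a n : ℕ) : AddSubmonoid ℕ :=
  AddSubmonoid.closure {x | ∃ i, 1 ≤ i ∧ x = aseq b a n i}

/-- The set of pseudo-Frobenius numbers of `S_a(b,n)`: integers `x ∉ S` such that
`x + s ∈ S` for every nonzero `s ∈ S`. -/
def PF (b a n : ℕ) : Set ℤ :=
  {x : ℤ | (¬ ∃ t ∈ grep b a n, (t : ℤ) = x) ∧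
    ∀ s ∈ grep b a n, s ≠ 0 → ∃ t ∈ grep b a n, (t : ℤ) = x + s}

namespace RepAux

theorem repunit_succ (b l : ℕ) : repunit b (l+1) = b * repunit b l + 1 := by
  unfold repunit
  rw [Finset.sum_range_succ' (fun j => b ^ j), Finset.mul_sum]
  simp only [pow_zero]
  congr 1
  exact Finset.sum_congr rfl fun i _ => by ring

theorem repunit_one (b : ℕ) : repunit b 1 = 1 := by simp [repunit]

theorem repunit_pos (b : ℕ) {l : ℕ} (hl : 1 ≤ l) : 1 ≤ repunit b l := by
  obtain ⟨k, rfl⟩ := Nat.exists_eq_add_of_le hl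
  rw [add_comm, repunit_succ]; omega

theorem repunit_mono (b : ℕ) {j l : ℕ} (h : j ≤ l) : repunit b j ≤ repunit b l := by
  unfold repunit
  exact Finset.sum_le_sum_of_subset (Finset.range_subset_range.2 h)

theorem repunit_strict (b : ℕ) (hb : 1 ≤ b) {j l : ℕ} (h : j < l) :
    repunit b j < repunit b l := by
  calc repunit b j < repunit b j + 1 := Nat.lt_succ_self _
  _ ≤ b * repunit b j + 1 := by nlinarith [repunit_mono b (Nat.zero_le j)]
  _ = repunit b (j+1) := (repunit_succ b j).symm
  _ ≤ repunit b l := repunit_mono b h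

theorem pow_eq_repunit (b : ℕ) (hb : 1 ≤ b) (l : ℕ) :
    b ^ l = (b - 1) * repunit b l + 1 := by
  induction l with
  | zero => simp [repunit]
  | succ l ih =>
    rw [repunit_succ, pow_succ]
    have h1 : b - 1 + 1 = b := by omega
    nlinarith [ih]

theorem repunit_add (b k n : ℕ) :
    repunit b (k + n) = b ^ n * repunit b k + repunit b n := by
  induction k with
  | zero => simp [repunit]
  | succ k ih =>
    have : k + 1 + n = (k + n) + 1 := by omega
    have h2 : b * repunit b n + 1 = b ^ n + repunit b n := by
      rw [← repunit_succ]
      unfold repunit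
      rw [Finset.sum_range_succ]
      omega
    rw [this, repunit_succ, ih, repunit_succ b k]
    nlinarith [h2]

theorem lt_repunit (b : ℕ) (hb : 2 ≤ b) (l : ℕ) : l < repunit b (l+1) := by
  induction l with
  | zero => simp [repunit_one]
  | succ l ih =>
    rw [repunit_succ]
    have := repunit_pos b (l := l+1) (by omega)
    nlinarith

def sig (b : ℕ) : ℕ → ℕ → ℕ
  | 0, t => t
  | (l+1), t => t / repunit b (l+1) + sig b l (t % repunit b (l+1))
theorem sig_zero (b t : ℕ) : sig b 0 t = t := rfl
theorem sig_succ (b l t : ℕ) :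
    sig b (l+1) t = t / repunit b (l+1) + sig b l (t % repunit b (l+1)) := rfl

section Sig
variable {b : ℕ}

/-- decompose sig at a successor level from an explicit division. -/
theorem sig_decomp (l : ℕ) {t q r : ℕ} (h : t = repunit b (l+1) * q + r)
    (hr : r < repunit b (l+1)) : sig b (l+1) t = q + sig b l r := by
  have hpos : 0 < repunit b (l+1) := repunit_pos b (by omega)
  have hd : t / repunit b (l+1) = q := by
    rw [h, Nat.mul_add_div hpos, Nat.div_eq_of_lt hr]; omega
  have hm : t % repunit b (l+1) = r := by
    rw [h, Nat.mul_add_mod, Nat.mod_eq_of_lt hr]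
  rw [sig_succ, hd, hm]

theorem sig_of_zero (l : ℕ) : sig b l 0 = 0 := by
  induction l with
  | zero => rfl
  | succ l ih => rw [sig_succ, Nat.zero_div, Nat.zero_mod, ih]

variable (hb : 2 ≤ b)
include hb

/-- S2': upper bound, subtraction-free form. -/
theorem sig_le : ∀ l t, t < repunit b (l+1) →
    sig b l t + t * (b - 1) ≤ b ^ (l+1) := by
  obtain ⟨c, hc1, hc2⟩ : ∃ c, b - 1 = c ∧ b = c + 1 := ⟨b - 1, rfl, by omega⟩
  rw [hc1]
  intro l
  induction l with
  | zero =>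
    intro t ht
    rw [repunit_one] at ht
    interval_cases t
    simp [sig_zero]
  | succ l ih =>
    intro t ht
    have hR1pos : 0 < repunit b (l+1) := repunit_pos b (by omega)
    obtain ⟨q, r, hdm, hrlt⟩ : ∃ q r, t = repunit b (l+1) * q + r ∧ r < repunit b (l+1) :=
      ⟨t / repunit b (l+1), t % repunit b (l+1), (Nat.div_add_mod t _).symm, Nat.mod_lt _ hR1pos⟩
    rw [sig_decomp l hdm hrlt]
    have hRs : repunit b (l+1+1) = b * repunit b (l+1) + 1 := repunit_succ b (l+1)
    have IH := ih r hrlt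
    have hpow1 : b ^ (l+1) = c * repunit b (l+1) + 1 := by
      rw [pow_eq_repunit b (by omega) (l+1), hc1]
    have hpow2 : b ^ (l+1+1) = c * repunit b (l+1+1) + 1 := by
      rw [pow_eq_repunit b (by omega) (l+1+1), hc1]
    have hqb : q ≤ b := by
      by_contra h
      push_neg at h
      have : repunit b (l+1) * (b+1) ≤ repunit b (l+1) * q := Nat.mul_le_mul_left _ (by omega)
      nlinarith
    rcases Nat.lt_or_ge q b with hq | hq
    · nlinarith [Nat.mul_le_mul_right (repunit b (l+1) * c) (show q + 1 ≤ b by omega)]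
    · have hq : q = b := by omega
      subst hq
      have hr0 : r = 0 := by nlinarith
      subst hr0
      rw [sig_of_zero]
      nlinarith

/-- S3': φ-monotonicity. -/
theorem sig_mono_phi : ∀ l u t, u ≤ t →
    sig b l u + u * (b - 1) ≤ sig b l t + t * (b - 1) := by
  obtain ⟨c, hc1, hc2⟩ : ∃ c, b - 1 = c ∧ b = c + 1 := ⟨b - 1, rfl, by omega⟩
  rw [hc1]
  intro l
  induction l with
  | zero =>
    intro u t hut
    simp only [sig_zero]
    nlinarith
  | succ l ih =>
    intro u t hut
    have hR1pos : 0 < repunit b (l+1) := repunit_pos b (by omega)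
    obtain ⟨q, r, hdm, hrlt⟩ : ∃ q r, t = repunit b (l+1) * q + r ∧ r < repunit b (l+1) :=
      ⟨t / repunit b (l+1), t % repunit b (l+1), (Nat.div_add_mod t _).symm, Nat.mod_lt _ hR1pos⟩
    obtain ⟨q', r', hdm', hrlt'⟩ : ∃ q r, u = repunit b (l+1) * q + r ∧ r < repunit b (l+1) :=
      ⟨u / repunit b (l+1), u % repunit b (l+1), (Nat.div_add_mod u _).symm, Nat.mod_lt _ hR1pos⟩
    rw [sig_decomp l hdm hrlt, sig_decomp l hdm' hrlt']
    have hq'q : q' ≤ q := by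
      by_contra h
      push_neg at h
      have : repunit b (l+1) * (q+1) ≤ repunit b (l+1) * q' := Nat.mul_le_mul_left _ (by omega)
      nlinarith
    rcases Nat.eq_or_lt_of_le hq'q with he | hlt
    · subst he
      have hr'r : r' ≤ r := by nlinarith
      have := ih r' r hr'r
      nlinarith
    · have h1 := sig_le hb l r' hrlt'
      have hpow1 : b ^ (l+1) = c * repunit b (l+1) + 1 := by
        rw [pow_eq_repunit b (by omega) (l+1), hc1]
      rw [hc1] at h1
      have : repunit b (l+1) * (q' + 1) ≤ repunit b (l+1) * q := Nat.mul_le_mul_left _ (by omega)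
      nlinarith

/-- S5'. -/
theorem sig_b_repunit : ∀ l j, j ≤ l → sig b l (b * repunit b j) ≤ b := by
  intro l
  induction l with
  | zero =>
    intro j hj
    interval_cases j
    simp [repunit, sig_zero]
  | succ l ih =>
    intro j hj
    have hR1pos : 0 < repunit b (l+1) := repunit_pos b (by omega)
    rcases Nat.eq_or_lt_of_le hj with he | hlt
    · rw [he]
      have hdm : b * repunit b (l+1) = repunit b (l+1) * b + 0 := by ring
      rw [sig_decomp l hdm hR1pos, sig_of_zero]
      omega
    · have hj' : j ≤ l := by omega
      have hlt2 : b * repunit b j < repunit b (l+1) := by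
        have h1 : b * repunit b j + 1 = repunit b (j+1) := (repunit_succ b j).symm
        have h2 : repunit b (j+1) ≤ repunit b (l+1) := repunit_mono b (by omega)
        omega
      have hdm : b * repunit b j = repunit b (l+1) * 0 + b * repunit b j := by ring
      rw [sig_decomp l hdm hlt2]
      simpa using ih j hj'

/-- S4': carry estimate. -/
theorem sig_carry_le : ∀ l j u r, 1 ≤ j → j ≤ l → r < repunit b (l+1) →
    u + repunit b (l+1) = r + repunit b j → sig b l u ≤ sig b l r := by
  intro l
  induction l with
  | zero => intro j u r h1 h2; omega
  | succ l ih =>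
    intro j u r h1j hjl hr hur
    have hR1pos : 0 < repunit b (l+1) := repunit_pos b (by omega)
    have hRs : repunit b (l+1+1) = repunit b (l+1) * b + 1 := by
      rw [repunit_succ b (l+1)]; ring
    have hRj : repunit b j ≤ repunit b (l+1) := repunit_mono b (by omega)
    obtain ⟨q, s, hdm, hslt⟩ : ∃ q s, r = repunit b (l+1) * q + s ∧ s < repunit b (l+1) :=
      ⟨r / repunit b (l+1), r % repunit b (l+1), (Nat.div_add_mod r _).symm, Nat.mod_lt _ hR1pos⟩
    have hmul1 : repunit b (l+1) * b = repunit b (l+1) * (b-1) + repunit b (l+1) := by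
      have h9 : (b - 1) + 1 = b := by omega
      calc repunit b (l+1) * b = repunit b (l+1) * ((b-1) + 1) := by rw [h9]
      _ = repunit b (l+1) * (b-1) + repunit b (l+1) := by ring
    have hqlb : b - 1 ≤ q := by
      by_contra h
      push_neg at h
      have h3 : repunit b (l+1) * (q + 1) ≤ repunit b (l+1) * (b - 1) :=
        Nat.mul_le_mul_left _ (by omega)
      have h4 : repunit b (l+1) * (q+1) = repunit b (l+1) * q + repunit b (l+1) := by ring
      omega
    have hqub : q ≤ b := by
      by_contra h
      push_neg at h
      have h3 : repunit b (l+1) * (b+1) ≤ repunit b (l+1) * q :=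
        Nat.mul_le_mul_left _ (by omega)
      have h4 : repunit b (l+1) * (b+1) = repunit b (l+1) * b + repunit b (l+1) := by ring
      omega
    rw [sig_decomp l hdm hslt]
    rcases Nat.eq_or_lt_of_le hqub with he | hlt
    · -- q = b, s = 0, u = repunit b j - 1 = b * repunit b (j-1)
      rw [he] at hdm ⊢
      have hs0 : s = 0 := by omega
      rw [hs0] at hdm
      have hu : u + 1 = repunit b j := by omega
      obtain ⟨j', rfl⟩ : ∃ j', j = j' + 1 := ⟨j - 1, by omega⟩
      have hu2 : u = b * repunit b j' := by
        have := repunit_succ b j'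
        omega
      have hulty : u < repunit b (l+1) := by omega
      have hdm2 : u = repunit b (l+1) * 0 + u := by ring
      rw [sig_decomp l hdm2 hulty, hs0, sig_of_zero, hu2]
      have := sig_b_repunit hb l j' (by omega)
      omega
    · have hq : q = b - 1 := by omega
      rw [hq] at hdm ⊢
      -- u + R1 + 1 = s + repunit b j, s ≥ 1
      have hkey : u + repunit b (l+1) + 1 = s + repunit b j := by omega
      have hs1 : 1 ≤ s := by omega
      obtain ⟨s', rfl⟩ : ∃ s', s = s' + 1 := ⟨s - 1, by omega⟩
      have hult : u < repunit b (l+1) := by omega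
      have hdm2 : u = repunit b (l+1) * 0 + u := by ring
      rw [sig_decomp l hdm2 hult]
      have hmono : sig b l s' ≤ sig b l (s' + 1) + (b - 1) := by
        have h5 := sig_mono_phi hb l s' (s' + 1) (by omega)
        have h6 : (s' + 1) * (b - 1) = s' * (b-1) + (b-1) := by ring
        omega
      rcases Nat.eq_or_lt_of_le hjl with hej | hjl'
      · -- j = l + 1 : u = s'
        have hus : u = s' := by
          have h7 : repunit b j = repunit b (l+1) := by rw [hej]
          omega
        rw [hus]
        omega
      · have ih2 := ih j u s' h1j (by omega) (by omega) (by omega)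
        omega

/-- S7: adding one coin. -/
theorem sig_add_coin : ∀ l j t, 1 ≤ j → j ≤ l →
    sig b l (t + repunit b j) ≤ sig b l t + 1 := by
  intro l
  induction l with
  | zero => intro j t h1 h2; omega
  | succ l ih =>
    intro j t h1j hjl
    have hR1pos : 0 < repunit b (l+1) := repunit_pos b (by omega)
    obtain ⟨q, r, hdm, hrlt⟩ : ∃ q r, t = repunit b (l+1) * q + r ∧ r < repunit b (l+1) :=
      ⟨t / repunit b (l+1), t % repunit b (l+1), (Nat.div_add_mod t _).symm, Nat.mod_lt _ hR1pos⟩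
    rw [sig_decomp l hdm hrlt]
    rcases Nat.eq_or_lt_of_le hjl with hej | hjl'
    · subst hej
      have hdm2 : t + repunit b (l+1) = repunit b (l+1) * (q+1) + r := by
        rw [hdm]; ring
      rw [sig_decomp l hdm2 hrlt]
      omega
    · have hjl2 : j ≤ l := by omega
      have hRj : repunit b j ≤ repunit b (l+1) := repunit_mono b (by omega)
      rcases Nat.lt_or_ge (r + repunit b j) (repunit b (l+1)) with hcase | hcase
      · have hdm2 : t + repunit b j = repunit b (l+1) * q + (r + repunit b j) := by omega
        rw [sig_decomp l hdm2 hcase]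
        have := ih j r h1j hjl2
        omega
      · obtain ⟨u, hu⟩ : ∃ u, u + repunit b (l+1) = r + repunit b j :=
          ⟨r + repunit b j - repunit b (l+1), by omega⟩
        have hult : u < repunit b (l+1) := by omega
        have hdm2 : t + repunit b j = repunit b (l+1) * (q + 1) + u := by
          have h8 : repunit b (l+1) * (q+1) = repunit b (l+1) * q + repunit b (l+1) := by ring
          omega
        rw [sig_decomp l hdm2 hult]
        have := sig_carry_le hb l j u r h1j hjl2 hrlt hu
        omega

/-- S8: values near the top. -/
theorem sig_top : ∀ l u t, 1 ≤ u → u ≤ l → t + u = repunit b (l+1) →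
    sig b l t = u * (b - 1) + 1 := by
  intro l
  induction l with
  | zero => intro u t h1 h2; omega
  | succ l ih =>
    intro u t h1u hul ht
    have hR1pos : 0 < repunit b (l+1) := repunit_pos b (by omega)
    have hRs : repunit b (l+1+1) = repunit b (l+1) * b + 1 := by
      rw [repunit_succ b (l+1)]; ring
    have hmul1 : repunit b (l+1) * b = repunit b (l+1) * (b-1) + repunit b (l+1) := by
      have h9 : (b - 1) + 1 = b := by omega
      calc repunit b (l+1) * b = repunit b (l+1) * ((b-1) + 1) := by rw [h9]
      _ = repunit b (l+1) * (b-1) + repunit b (l+1) := by ring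
    rcases Nat.eq_or_lt_of_le h1u with he | hu2
    · -- u = 1, t = R1 * b
      have ht2 : t = repunit b (l+1) * b + 0 := by omega
      rw [sig_decomp l ht2 hR1pos, sig_of_zero, ← he]
      omega
    · obtain ⟨u', rfl⟩ : ∃ u', u = u' + 1 := ⟨u - 1, by omega⟩
      have hu'l : u' ≤ l := by omega
      have h1u' : 1 ≤ u' := by omega
      have hu'R : u' < repunit b (l+1) := by
        have := lt_repunit b hb l
        omega
      obtain ⟨s, hs⟩ : ∃ s, s + u' = repunit b (l+1) := ⟨repunit b (l+1) - u', by omega⟩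
      have ht2 : t = repunit b (l+1) * (b-1) + s := by omega
      have hslt : s < repunit b (l+1) := by omega
      rw [sig_decomp l ht2 hslt, ih u' s h1u' hu'l hs]
      have : (u' + 1) * (b-1) = u' * (b-1) + (b-1) := by ring
      omega

/-- S9. -/
theorem sig_pos : ∀ l t, 1 ≤ t → 1 ≤ sig b l t := by
  intro l
  induction l with
  | zero => intro t ht; rwa [sig_zero]
  | succ l ih =>
    intro t ht
    have hR1pos : 0 < repunit b (l+1) := repunit_pos b (by omega)
    obtain ⟨q, r, hdm, hrlt⟩ : ∃ q r, t = repunit b (l+1) * q + r ∧ r < repunit b (l+1) :=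
      ⟨t / repunit b (l+1), t % repunit b (l+1), (Nat.div_add_mod t _).symm, Nat.mod_lt _ hR1pos⟩
    rw [sig_decomp l hdm hrlt]
    rcases Nat.eq_zero_or_pos q with hq | hq
    · rw [hq] at hdm
      have : 1 ≤ r := by omega
      have := ih r this
      omega
    · omega

/-- S11: the witness lemma. -/
theorem sig_witness : ∀ l, 1 ≤ l → ∀ t, t + (l+1) ≤ repunit b (l+1) →
    ∃ j, 1 ≤ j ∧ j ≤ l ∧ t + repunit b j < repunit b (l+1) ∧
      sig b l (t + repunit b j) = sig b l t + 1 := by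
  intro l
  induction l with
  | zero => omega
  | succ l ih =>
    intro _ t ht
    have hR1pos : 0 < repunit b (l+1) := repunit_pos b (by omega)
    have hRs : repunit b (l+1+1) = repunit b (l+1) * b + 1 := by
      rw [repunit_succ b (l+1)]; ring
    obtain ⟨q, r, hdm, hrlt⟩ : ∃ q r, t = repunit b (l+1) * q + r ∧ r < repunit b (l+1) :=
      ⟨t / repunit b (l+1), t % repunit b (l+1), (Nat.div_add_mod t _).symm, Nat.mod_lt _ hR1pos⟩
    rcases Nat.eq_zero_or_pos l with hl0 | hl1
    · -- base: l = 0, so level 1, coins {1}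
      subst hl0
      refine ⟨1, le_refl _, le_refl _, ?_, ?_⟩
      · rw [repunit_one]; omega
      · have h1 : t + repunit b 1 = repunit b 1 * (t + 1) + 0 := by
          rw [repunit_one]; ring
        have h2 : t = repunit b 1 * t + 0 := by rw [repunit_one]; ring
        rw [sig_decomp 0 h1 hR1pos, sig_decomp 0 h2 hR1pos, sig_of_zero]
    · -- step: l ≥ 1
      rcases le_or_gt (r + (l+1)) (repunit b (l+1)) with hcase | hcase
      · -- use IH on r, same quotient
        obtain ⟨j, h1j, hjl, hjb, hjs⟩ := ih hl1 r hcase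
        have hqb : q + 1 ≤ b := by
          by_contra h
          push_neg at h
          have h3 : repunit b (l+1) * b ≤ repunit b (l+1) * q := Nat.mul_le_mul_left _ (by omega)
          omega
        have hdm2 : t + repunit b j = repunit b (l+1) * q + (r + repunit b j) := by omega
        refine ⟨j, h1j, by omega, ?_, ?_⟩
        · have h4 : repunit b (l+1) * (q + 1) ≤ repunit b (l+1) * b :=
            Nat.mul_le_mul_left _ (by omega)
          have h5 : repunit b (l+1) * (q+1) = repunit b (l+1) * q + repunit b (l+1) := by ring
          omega
        · rw [sig_decomp l hdm2 hjb, sig_decomp l hdm hrlt, hjs]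
          omega
      · -- top zone of r: take j = l+1
        obtain ⟨u, hu⟩ : ∃ u, r + u = repunit b (l+1) := ⟨repunit b (l+1) - r, by omega⟩
        have h1u : 1 ≤ u := by omega
        have hul : u ≤ l := by omega
        have hqb : q + 2 ≤ b := by
          by_contra h
          push_neg at h
          have h3 : repunit b (l+1) * (b-1) ≤ repunit b (l+1) * q := Nat.mul_le_mul_left _ (by omega)
          have hmul1 : repunit b (l+1) * b = repunit b (l+1) * (b-1) + repunit b (l+1) := by
            have h9 : (b - 1) + 1 = b := by omega
            calc repunit b (l+1) * b = repunit b (l+1) * ((b-1) + 1) := by rw [h9]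
            _ = repunit b (l+1) * (b-1) + repunit b (l+1) := by ring
          omega
        have hdm2 : t + repunit b (l+1) = repunit b (l+1) * (q+1) + r := by
          have h5 : repunit b (l+1) * (q+1) = repunit b (l+1) * q + repunit b (l+1) := by ring
          omega
        refine ⟨l+1, by omega, le_refl _, ?_, ?_⟩
        · have h4 : repunit b (l+1) * (q + 2) ≤ repunit b (l+1) * b :=
            Nat.mul_le_mul_left _ (by omega)
          have h5 : repunit b (l+1) * (q+2) = repunit b (l+1) * q + repunit b (l+1) + repunit b (l+1) := by ring
          omega
        · rw [sig_decomp l hdm2 hrlt, sig_decomp l hdm hrlt]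
          omega

end Sig

section Grep
variable {b a n : ℕ}

theorem gen_mem (j : ℕ) : repunit b n + a * repunit b j ∈ grep b a n := by
  apply AddSubmonoid.subset_closure
  exact ⟨j + 1, by omega, by simp [aseq]⟩

/-- S1: sufficiency of the normal form. -/
theorem mem_of_form : ∀ l t c, a * t + (sig b l t + c) * repunit b n ∈ grep b a n := by
  intro l
  induction l with
  | zero =>
    intro t c
    rw [sig_zero]
    have he : a * t + (t + c) * repunit b n
        = t • (repunit b n + a * repunit b 1) + c • (repunit b n + a * repunit b 0) := by
      simp [repunit, smul_eq_mul]
      ring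
    rw [he]
    exact add_mem (AddSubmonoid.nsmul_mem _ (gen_mem 1) t)
      (AddSubmonoid.nsmul_mem _ (gen_mem 0) c)
  | succ l ih =>
    intro t c
    have hR1pos : 0 < repunit b (l+1) := repunit_pos b (by omega)
    obtain ⟨q, r, hdm, hrlt⟩ : ∃ q r, t = repunit b (l+1) * q + r ∧ r < repunit b (l+1) :=
      ⟨t / repunit b (l+1), t % repunit b (l+1), (Nat.div_add_mod t _).symm, Nat.mod_lt _ hR1pos⟩
    rw [sig_decomp l hdm hrlt]
    have he : a * t + (q + sig b l r + c) * repunit b n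
        = q • (repunit b n + a * repunit b (l+1)) + (a * r + (sig b l r + c) * repunit b n) := by
      rw [hdm]; simp [smul_eq_mul]; ring
    rw [he]
    exact add_mem (AddSubmonoid.nsmul_mem _ (gen_mem (l+1)) q) (ih r c)

/-- Lred: reduction of high repunits. -/
theorem red (hb : 2 ≤ b) (hn : 2 ≤ n) : ∀ l, ∃ l' d, l' ≤ n - 1 ∧
    a * repunit b l = a * repunit b l' + d * repunit b n := by
  intro l
  induction l using Nat.strong_induction_on with
  | _ l ih =>
    rcases le_or_gt l (n-1) with h | h
    · exact ⟨l, 0, h, by ring⟩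
    · have hln : n ≤ l := by omega
      obtain ⟨k, rfl⟩ : ∃ k, l = k + n := ⟨l - n, by omega⟩
      obtain ⟨l', d, hl', hred⟩ := ih k (by omega)
      refine ⟨l', d + a * ((b-1) * repunit b k + 1), hl', ?_⟩
      rw [repunit_add b k n]
      have hbn : b ^ n = (b - 1) * repunit b n + 1 := pow_eq_repunit b (by omega) n
      calc a * (b ^ n * repunit b k + repunit b n)
          = a * repunit b k + (a * ((b-1) * repunit b k + 1)) * repunit b n := by
            rw [hbn]; ring
        _ = a * repunit b l' + d * repunit b n + (a * ((b-1) * repunit b k + 1)) * repunit b n := by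
            rw [hred]
        _ = a * repunit b l' + (d + a * ((b-1) * repunit b k + 1)) * repunit b n := by ring

/-- S12 (Lemma M): necessity of the normal form. -/
theorem form_of_mem (hb : 2 ≤ b) (hn : 2 ≤ n) (ha : 1 ≤ a) {x : ℕ} (hx : x ∈ grep b a n) :
    ∃ t c, t < repunit b n ∧ sig b (n-1) t ≤ c ∧ x = a * t + c * repunit b n := by
  obtain ⟨L, hL, rfl⟩ := AddSubmonoid.exists_list_of_mem_closure hx
  clear hx
  induction L with
  | nil =>
    exact ⟨0, 0, repunit_pos b (by omega), by rw [sig_of_zero], by simp⟩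
  | cons g L ihL =>
    obtain ⟨t, c, htm, htc, hform⟩ := ihL (fun y hy => hL y (List.mem_cons_of_mem g hy))
    obtain ⟨i, hi1, hgi⟩ := hL g List.mem_cons_self
    obtain ⟨l', d, hl', hred⟩ := red hb hn (a := a) (i - 1)
    have hnn : n - 1 + 1 = n := by omega
    have hglue : List.sum (g :: L) = a * (t + repunit b l') + (c + 1 + d) * repunit b n := by
      rw [List.sum_cons, hform, hgi]
      unfold aseq
      calc repunit b n + a * repunit b (i-1) + (a * t + c * repunit b n)
          = a * repunit b (i-1) + (a * t + (c + 1) * repunit b n) := by ring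
        _ = a * repunit b l' + d * repunit b n + (a * t + (c+1) * repunit b n) := by rw [hred]
        _ = a * (t + repunit b l') + (c + 1 + d) * repunit b n := by ring
    rcases Nat.eq_zero_or_pos l' with hl0 | hl1
    · refine ⟨t, c + 1 + d, htm, by omega, ?_⟩
      rw [hglue, hl0]
      simp [repunit]
    · rcases Nat.lt_or_ge (t + repunit b l') (repunit b n) with hlt | hge
      · refine ⟨t + repunit b l', c + 1 + d, hlt, ?_, hglue⟩
        have h7 : sig b (n-1) (t + repunit b l') ≤ sig b (n-1) t + 1 :=
          sig_add_coin hb (n-1) l' t hl1 (by omega)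
        omega
      · obtain ⟨u, hu⟩ : ∃ u, u + repunit b n = t + repunit b l' :=
          ⟨t + repunit b l' - repunit b n, by omega⟩
        have hult : u < repunit b n := by
          have : repunit b l' ≤ repunit b n := repunit_mono b (by omega)
          omega
        have hsu : sig b (n-1) u ≤ sig b (n-1) t := by
          apply sig_carry_le hb (n-1) l' u t hl1 (by omega) (by rwa [hnn]) (by rwa [hnn])
        refine ⟨u, c + 1 + d + a, hult, by omega, ?_⟩
        rw [hglue]
        calc a * (t + repunit b l') + (c + 1 + d) * repunit b n
            = a * (u + repunit b n) + (c + 1 + d) * repunit b n := by rw [hu]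
          _ = a * u + (c + 1 + d + a) * repunit b n := by ring

/-- M1: full membership criterion. -/
theorem mem_iff (hb : 2 ≤ b) (hn : 2 ≤ n) (ha : 1 ≤ a) (x : ℕ) :
    x ∈ grep b a n ↔ ∃ t c, t < repunit b n ∧ sig b (n-1) t ≤ c ∧
      x = a * t + c * repunit b n := by
  constructor
  · exact form_of_mem hb hn ha
  · rintro ⟨t, c, htm, htc, rfl⟩
    have h1 : c = sig b (n-1) t + (c - sig b (n-1) t) := by omega
    rw [h1]
    exact mem_of_form (n-1) t (c - sig b (n-1) t)

/-- M2: uniqueness of the normal form. -/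
theorem form_unique (hgcd : Nat.gcd (repunit b n) a = 1) (hn : 2 ≤ n) (hb : 2 ≤ b)
    {t c t' c' : ℕ} (h1 : t < repunit b n) (h2 : t' < repunit b n)
    (he : a * t + c * repunit b n = a * t' + c' * repunit b n) : t = t' ∧ c = c' := by
  have hm1 : 0 < repunit b n := repunit_pos b (by omega)
  have key : ∀ u v d e : ℕ, u ≤ v → v < repunit b n →
      a * u + d * repunit b n = a * v + e * repunit b n → u = v := by
    intro u v d e huv hv heq
    have hav : a * u ≤ a * v := Nat.mul_le_mul_left a huv
    have hde : e ≤ d := by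
      by_contra hcon
      push_neg at hcon
      have : (d+1) * repunit b n ≤ e * repunit b n := Nat.mul_le_mul_right _ (by omega)
      have h4 : (d+1) * repunit b n = d * repunit b n + repunit b n := by ring
      have h5 : a * v + e * repunit b n ≤ a * v + e * repunit b n := le_refl _
      omega
    have hmul1 : a * (v - u) + a * u = a * v := by
      rw [← Nat.mul_add]
      congr 1
      omega
    have hmul2 : (d - e) * repunit b n + e * repunit b n = d * repunit b n := by
      rw [← Nat.add_mul]
      congr 1
      omega
    have heq2 : a * (v - u) = (d - e) * repunit b n := by omega
    have hdvd : repunit b n ∣ (v - u) * a := by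
      refine ⟨d - e, ?_⟩
      rw [mul_comm] at heq2
      rw [heq2]
      ring
    have hdvd2 : repunit b n ∣ (v - u) := (Nat.Coprime.dvd_of_dvd_mul_right hgcd) hdvd
    have : v - u < repunit b n := by omega
    rcases Nat.eq_zero_or_pos (v - u) with h0 | hpos
    · omega
    · exfalso
      have := Nat.le_of_dvd hpos hdvd2
      omega
  rcases le_total t t' with hle | hle
  · have := key t t' c c' hle h2 he
    subst this
    refine ⟨rfl, ?_⟩
    have := Nat.eq_of_mul_eq_mul_right hm1 (show c * repunit b n = c' * repunit b n by omega)
    exact this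
  · have := key t' t c' c hle h1 he.symm
    have ht : t = t' := this.symm
    subst ht
    refine ⟨rfl, ?_⟩
    exact Nat.eq_of_mul_eq_mul_right hm1 (show c * repunit b n = c' * repunit b n by omega)

end Grep

section Main
variable {b a n : ℕ} (hb : 2 ≤ b) (hn : 2 ≤ n) (ha : 1 ≤ a)
  (hgcd : Nat.gcd (repunit b n) a = 1)

/-- The candidate pseudo-Frobenius numbers, as naturals. -/
def FK (b a n k : ℕ) : ℕ := a * (repunit b n - k) + k * (b-1) * repunit b n

include hb hn ha hgcd

theorem FK_mem_PF (k : ℕ) (hk1 : 1 ≤ k) (hk2 : k ≤ n - 1) :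
    ((FK b a n k : ℕ) : ℤ) ∈ PF b a n := by
  have hm1 : 0 < repunit b n := repunit_pos b (by omega)
  have hnn : n - 1 + 1 = n := by omega
  have hkm : k < repunit b n := by
    have := lt_repunit b hb (n-1)
    rw [hnn] at this
    omega
  have hsigtop : ∀ u, 1 ≤ u → u ≤ n - 1 →
      sig b (n-1) (repunit b n - u) = u * (b-1) + 1 := by
    intro u h1 h2
    apply sig_top hb (n-1) u _ h1 h2
    rw [hnn]
    have : u < repunit b n := by
      have := lt_repunit b hb (n-1); rw [hnn] at this; omega
    omega
  constructor
  · -- not in grep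
    rintro ⟨y, hy, hyx⟩
    have hyF : y = FK b a n k := by exact_mod_cast hyx
    obtain ⟨t, c, htm, htc, heq⟩ := form_of_mem hb hn ha hy
    rw [hyF] at heq
    have heq2 : a * t + c * repunit b n = a * (repunit b n - k) + (k * (b-1)) * repunit b n := by
      rw [← heq]; unfold FK; ring
    obtain ⟨ht, hc⟩ := form_unique hgcd hn hb htm (by omega) heq2
    rw [ht] at htc
    rw [hsigtop k hk1 hk2] at htc
    omega
  · -- sums stay in grep
    intro s hs hs0
    obtain ⟨t', c', htm', htc', rfl⟩ := form_of_mem hb hn ha hs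
    refine ⟨FK b a n k + (a * t' + c' * repunit b n), ?_, by push_cast; ring⟩
    rcases Nat.eq_zero_or_pos t' with ht0 | ht1
    · -- t' = 0 : s = c' m with c' ≥ 1
      have hc1 : 1 ≤ c' := by
        rcases Nat.eq_zero_or_pos c' with h | h
        · exfalso; apply hs0; rw [ht0, h]; ring
        · exact h
      rw [mem_iff hb hn ha]
      refine ⟨repunit b n - k, k * (b-1) + c', by omega, ?_, by rw [ht0]; unfold FK; ring⟩
      rw [hsigtop k hk1 hk2]
      omega
    · have hsigpos : 1 ≤ sig b (n-1) t' := sig_pos hb (n-1) t' ht1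
      rcases Nat.lt_or_ge t' k with hlt | hge
      · -- 1 ≤ t' < k
        rw [mem_iff hb hn ha]
        refine ⟨repunit b n - (k - t'), k * (b-1) + c', by omega, ?_, ?_⟩
        · rw [hsigtop (k - t') (by omega) (by omega)]
          have : (k - t') * (b-1) ≤ k * (b-1) := Nat.mul_le_mul_right _ (by omega)
          omega
        · unfold FK
          have h9 : repunit b n - (k - t') = (repunit b n - k) + t' := by omega
          rw [h9]; ring
      · -- t' ≥ k
        rw [mem_iff hb hn ha]
        refine ⟨t' - k, k * (b-1) + c' + a, by omega, ?_, ?_⟩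
        · have hphi := sig_mono_phi hb (n-1) (t' - k) t' (by omega)
          have h8 : t' * (b-1) = (t' - k) * (b-1) + k * (b-1) := by
            rw [← Nat.add_mul]
            congr 1
            omega
          omega
        · unfold FK
          have h9 : a * (repunit b n - k) + a * t' = a * (t' - k) + a * repunit b n := by
            rw [← Nat.mul_add, ← Nat.mul_add]
            congr 1
            omega
          calc a * (repunit b n - k) + k * (b-1) * repunit b n + (a * t' + c' * repunit b n)
              = a * (repunit b n - k) + a * t' + (k * (b-1) + c') * repunit b n := by ring
            _ = a * (t' - k) + a * repunit b n + (k * (b-1) + c') * repunit b n := by rw [h9]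
            _ = a * (t' - k) + (k * (b-1) + c' + a) * repunit b n := by ring

theorem PF_sub (x : ℤ) (hx : x ∈ PF b a n) :
    ∃ k, 1 ≤ k ∧ k ≤ n - 1 ∧ x = ((FK b a n k : ℕ) : ℤ) := by
  obtain ⟨hx1, hx2⟩ := hx
  have hm1 : 0 < repunit b n := repunit_pos b (by omega)
  have hnn : n - 1 + 1 = n := by omega
  have hm_mem : repunit b n ∈ grep b a n := by
    have h0 : repunit b n = repunit b n + a * repunit b 0 := by simp [repunit]
    rw [h0]
    exact gen_mem 0
  obtain ⟨y, hy, hyx⟩ := hx2 (repunit b n) hm_mem (by omega)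
  obtain ⟨t, c, htm, htc, rfl⟩ := form_of_mem hb hn ha hy
  have hxval : x = (a : ℤ) * t + c * repunit b n - repunit b n := by push_cast at hyx ⊢; linarith
  have hc : c = sig b (n-1) t := by
    by_contra hcon
    have hc1 : sig b (n-1) t ≤ c - 1 := by omega
    apply hx1
    refine ⟨a * t + (c-1) * repunit b n, (mem_iff hb hn ha _).2 ⟨t, c-1, htm, hc1, rfl⟩, ?_⟩
    rw [hxval]
    have : 1 ≤ c := by omega
    push_cast [Nat.cast_sub this]
    ring
  have ht1 : 1 ≤ t := by
    rcases Nat.eq_zero_or_pos t with ht0 | h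
    · exfalso
      -- x = -m ; use the generator m + a
      have hgen : repunit b n + a * repunit b 1 ∈ grep b a n := gen_mem 1
      obtain ⟨z, hz, hzx⟩ := hx2 _ hgen (by positivity)
      have hza : (z : ℤ) = (a : ℤ) := by
        rw [hzx, hxval, ht0, hc, ht0, sig_of_zero]
        rw [repunit_one]
        push_cast
        ring
      have hzan : z = a := by exact_mod_cast hza
      obtain ⟨t'', c'', htm'', htc'', heq''⟩ := form_of_mem hb hn ha hz
      rw [hzan] at heq''
      rcases Nat.eq_zero_or_pos t'' with h0 | h1
      · rw [h0, Nat.mul_zero] at heq''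
        have hdvd : repunit b n ∣ a := by
          refine ⟨c'', ?_⟩
          rw [heq'']; ring
        have : repunit b n ∣ Nat.gcd (repunit b n) a := Nat.dvd_gcd dvd_rfl hdvd
        rw [hgcd] at this
        have := Nat.le_of_dvd (by omega) this
        have h3 : 3 ≤ repunit b n := by
          have e1 : repunit b 2 ≤ repunit b n := repunit_mono b hn
          have e2 : repunit b 2 = b + 1 := by
            rw [show (2:ℕ) = 1 + 1 from rfl, repunit_succ, repunit_one, Nat.mul_one]
          omega
        omega
      · rcases Nat.lt_or_ge t'' 2 with h2 | h2
        · have ht'' : t'' = 1 := by omega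
          rw [ht''] at heq''
          have hc0 : c'' = 0 := by
            rcases Nat.eq_zero_or_pos c'' with h | h
            · exact h
            · exfalso
              have : 1 * repunit b n ≤ c'' * repunit b n := Nat.mul_le_mul_right _ h
              omega
          rw [ht''] at htc''
          have := sig_pos hb (n-1) 1 (le_refl _)
          omega
        · exfalso
          have h4 : a * 2 ≤ a * t'' := Nat.mul_le_mul_left _ h2
          have h5 : a * 2 = a + a := by ring
          omega
    · exact h
  rcases Nat.lt_or_ge t (repunit b n - (n-1)) with hlow | hhigh
  · -- witness: contradiction, x not PF
    exfalso
    have hmn : n - 1 < repunit b n := by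
      have := lt_repunit b hb (n-1); rw [hnn] at this; exact this
    obtain ⟨j, hj1, hj2, hjb, hjs⟩ := sig_witness hb (n-1) (by omega) t (by rw [hnn]; omega)
    rw [hnn] at hjb
    have hgen : repunit b n + a * repunit b j ∈ grep b a n := gen_mem j
    obtain ⟨z, hz, hzx⟩ := hx2 _ hgen (by positivity)
    have hzv : (z : ℤ) = ((a * (t + repunit b j) + sig b (n-1) t * repunit b n : ℕ) : ℤ) := by
      rw [hzx, hxval, hc]
      push_cast
      ring
    have hzn : z = a * (t + repunit b j) + sig b (n-1) t * repunit b n := by exact_mod_cast hzv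
    obtain ⟨t₀, c₀, htm₀, htc₀, heq₀⟩ := form_of_mem hb hn ha hz
    rw [hzn] at heq₀
    obtain ⟨he1, he2⟩ := form_unique hgcd hn hb (by omega : t + repunit b j < repunit b n) htm₀ heq₀
    rw [← he1] at htc₀
    rw [hjs] at htc₀
    omega
  · -- x = FK k with k = m - t
    have hmn : n - 1 < repunit b n := by
      have := lt_repunit b hb (n-1); rw [hnn] at this; exact this
    refine ⟨repunit b n - t, by omega, by omega, ?_⟩
    have hsig : sig b (n-1) t = (repunit b n - t) * (b-1) + 1 := by
      apply sig_top hb (n-1) (repunit b n - t) t (by omega) (by omega)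
      rw [hnn]; omega
    rw [hxval, hc, hsig]
    unfold FK
    have h9 : repunit b n - (repunit b n - t) = t := by omega
    rw [h9]
    push_cast
    ring

omit ha hgcd in
theorem FK_cast (i k : ℕ) (h2i : 2 ≤ i) (hin : i ≤ n) (hik : i + k = n + 1) :
    ((FK b a n k : ℕ) : ℤ) = ((n : ℤ) - i + 1) * ((b : ℤ) ^ n - 1 - a) + a * repunit b n := by
  have hnn : n - 1 + 1 = n := by omega
  have hkm : k < repunit b n := by
    have := lt_repunit b hb (n-1)
    rw [hnn] at this
    omega
  have hbn : (b : ℤ) ^ n = ((b - 1 : ℕ) : ℤ) * (repunit b n : ℤ) + 1 := by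
    exact_mod_cast congrArg (Nat.cast (R := ℤ)) (pow_eq_repunit b (by omega) n)
  have hki : ((n : ℤ) - i + 1) = (k : ℤ) := by
    have : (i : ℤ) + k = (n : ℤ) + 1 := by exact_mod_cast congrArg (Nat.cast (R := ℤ)) hik
    linarith
  rw [hki, hbn]
  unfold FK
  push_cast [Nat.cast_sub (le_of_lt hkm), Nat.cast_sub (show 1 ≤ b by omega)]
  ring

end Main
end RepAux

theorem stmt_17 (b a n : ℕ) (hb : 1 < b) (hn : 1 < n) (ha : 0 < a)
    (hgcd : Nat.gcd (repunit b n) a = 1) :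
    PF b a n = {x : ℤ | ∃ i, 2 ≤ i ∧ i ≤ n ∧
        x = ((n : ℤ) - i + 1) * ((b : ℤ) ^ n - 1 - a) + a * repunit b n} ∧
    Nat.card (PF b a n) = n - 1 := by
  open RepAux in
  have hb2 : 2 ≤ b := hb
  have hn2 : 2 ≤ n := hn
  have ha1 : 1 ≤ a := ha
  have hset : PF b a n = {x : ℤ | ∃ i, 2 ≤ i ∧ i ≤ n ∧
      x = ((n : ℤ) - i + 1) * ((b : ℤ) ^ n - 1 - a) + a * repunit b n} := by
    ext x
    constructor
    · intro hx
      obtain ⟨k, hk1, hk2, rfl⟩ := RepAux.PF_sub hb2 hn2 ha1 hgcd x hx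
      exact ⟨n + 1 - k, by omega, by omega,
        RepAux.FK_cast (a := a) hb2 hn2 (n+1-k) k (by omega) (by omega) (by omega)⟩
    · rintro ⟨i, h2i, hin, rfl⟩
      rw [← RepAux.FK_cast hb2 hn2 i (n+1-i) h2i hin (by omega)]
      exact RepAux.FK_mem_PF hb2 hn2 ha1 hgcd (n+1-i) (by omega) (by omega)
  refine ⟨hset, ?_⟩
  rw [hset]
  have himg : {x : ℤ | ∃ i, 2 ≤ i ∧ i ≤ n ∧
      x = ((n : ℤ) - i + 1) * ((b : ℤ) ^ n - 1 - a) + a * repunit b n}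
      = (fun i : ℕ => ((n : ℤ) - i + 1) * ((b : ℤ) ^ n - 1 - a) + a * repunit b n)
        '' (Set.Icc 2 n) := by
    ext x
    simp only [Set.mem_image, Set.mem_Icc, Set.mem_setOf_eq]
    constructor
    · rintro ⟨i, h1, h2, h3⟩; exact ⟨i, ⟨h1, h2⟩, h3.symm⟩
    · rintro ⟨i, ⟨h1, h2⟩, h3⟩; exact ⟨i, h1, h2, h3.symm⟩
  rw [himg]
  have hD : ((b : ℤ) ^ n - 1 - a) ≠ 0 := by
    intro hcon
    have hbn : (b : ℤ) ^ n = ((b - 1 : ℕ) : ℤ) * (repunit b n : ℤ) + 1 := by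
      exact_mod_cast congrArg (Nat.cast (R := ℤ)) (RepAux.pow_eq_repunit b (by omega) n)
    have : (a : ℤ) = ((b-1 : ℕ) * repunit b n : ℕ) := by push_cast; linarith
    have han : a = (b-1) * repunit b n := by exact_mod_cast this
    have hdvd : repunit b n ∣ a := ⟨b - 1, by rw [han]; ring⟩
    have h6 : repunit b n ∣ Nat.gcd (repunit b n) a := Nat.dvd_gcd dvd_rfl hdvd
    rw [hgcd] at h6
    have h7 := Nat.le_of_dvd (by omega) h6
    have h3 : 3 ≤ repunit b n := by
      have e1 : repunit b 2 ≤ repunit b n := RepAux.repunit_mono b hn2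
      have e2 : repunit b 2 = b + 1 := by
        rw [show (2:ℕ) = 1 + 1 from rfl, RepAux.repunit_succ, RepAux.repunit_one, Nat.mul_one]
      omega
    omega
  have hinj : Set.InjOn (fun i : ℕ => ((n : ℤ) - i + 1) * ((b : ℤ) ^ n - 1 - a)
      + a * repunit b n) (Set.Icc 2 n) := by
    intro i hi i' hi' he
    simp only at he
    have h8 : ((n : ℤ) - i + 1) * ((b : ℤ) ^ n - 1 - a)
        = ((n : ℤ) - i' + 1) * ((b : ℤ) ^ n - 1 - a) := by linarith
    have h9 := mul_right_cancel₀ hD h8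
    have : (i : ℤ) = (i' : ℤ) := by linarith
    exact_mod_cast this
  rw [Nat.card_coe_set_eq, Set.ncard_image_of_injOn hinj,
    show (Set.Icc 2 n) = ↑(Finset.Icc 2 n) from (Finset.coe_Icc 2 n).symm,
    Set.ncard_coe_finset, Nat.card_Icc]
  omega
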